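/- arXiv:1806.09122 — 4 statements merged into one kernel-verified Lean document; each statement's English description precedes it below -/
import Mathlib

section
/- Let (H, ∘) be a semi-hypergroup and let R and S be strongly regular equivalence relations on H. Then the transitive closure (R ∪ S)* of the union R ∪ S is a strongly regular relation on H. -/
/-- A hyperoperation on `H`: every pair maps to a nonempty subset. -/
structure Hyperop (H : Type*) where
  op : H → H → Set H
  op_nonempty : ∀ x y, (op x y).Nonempty

namespace Hyperop

variable {H : Type*}

/-- Extension of the hyperoperation to subsets. -/
def sop (h : Hyperop H) (A B : Set H) : Set H := ⋃ a ∈ A, ⋃ b ∈ B, h.op a b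

/-- Associativity of a hyperoperation (on sets). -/
def IsAssoc (h : Hyperop H) : Prop :=
  ∀ x y z : H, h.sop (h.op x y) {z} = h.sop {x} (h.op y z)

/-- Reproduction axiom: `x ∘ H = H ∘ x = H`. -/
def IsReproductive (h : Hyperop H) : Prop :=
  ∀ x y : H, (∃ u, y ∈ h.op x u) ∧ (∃ v, y ∈ h.op v x)

/-- A relation `T` is strongly regular (on both sides) w.r.t. `h`. -/
def StronglyRegular (h : Hyperop H) (T : H → H → Prop) : Prop :=
  ∀ x y, T x y → ∀ a : H,
    (∀ u ∈ h.op a x, ∀ v ∈ h.op a y, T u v) ∧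
    (∀ u ∈ h.op x a, ∀ v ∈ h.op y a, T u v)

/-- `h.foldl x l` : the set `x ∘ l₁ ∘ ⋯ ∘ lₖ`. -/
def foldl (h : Hyperop H) : H → List H → Set H
  | x, [] => {x}
  | x, y :: l => ⋃ z ∈ h.op x y, h.foldl z l

/-- Hyper-"product" of a nonempty list of elements (empty list gives `∅`). -/
def listProd (h : Hyperop H) : List H → Set H
  | [] => ∅
  | x :: l => h.foldl x l

/-- Fold a list of subsets onto a subset. -/
def setFold (h : Hyperop H) : Set H → List (Set H) → Set H
  | A, [] => A
  | A, B :: l => h.setFold (h.sop A B) l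

end Hyperop

/-- `l'` is obtained from `l` by inserting one consecutive block of copies of `e`
(or is equal to `l`). -/
def InsertBlock {α : Type*} (e : α) (l l' : List α) : Prop :=
  l' = l ∨ ∃ (p q : List α) (k : ℕ), 1 ≤ k ∧ l = p ++ q ∧ l' = p ++ List.replicate k e ++ q

/-- A hyperring: `(R, +)` a hypergroup, `(R, ·)` a semi-hypergroup,
with two-sided distributivity. -/
structure Hyperring (R : Type*) where
  add : Hyperop R
  mul : Hyperop R
  add_assoc : add.IsAssoc
  add_repro : add.IsReproductive
  mul_assoc : mul.IsAssoc
  left_distrib : ∀ x y z : R, mul.sop {x} (add.op y z) = add.sop (mul.op x y) (mul.op x z)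
  right_distrib : ∀ x y z : R, mul.sop (add.op y z) {x} = add.sop (mul.op y x) (mul.op z x)

namespace Hyperring

variable {R : Type*}

/-- Sum of products: `ll` is a list of lists; each inner list is multiplied,
the results are added up. -/
def SOP (S : Hyperring R) : List (List R) → Set R
  | [] => ∅
  | l :: t => S.add.setFold (S.mul.listProd l) (t.map S.mul.listProd)

/-- A valid sum-of-products expression: nonempty list of nonempty lists. -/
def ValidExpr (S : Hyperring R) (ll : List (List R)) : Prop :=
  ll ≠ [] ∧ ∀ l ∈ ll, l ≠ []

/-- The Vougiouklis relation `Γ`. -/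
def gamma (S : Hyperring R) (x y : R) : Prop :=
  ∃ ll, S.ValidExpr ll ∧ x ∈ S.SOP ll ∧ y ∈ S.SOP ll

/-- The relation `α₊` : permuting the summands. -/
def alphaPlus (S : Hyperring R) (x y : R) : Prop :=
  ∃ ll ll', S.ValidExpr ll ∧ ll.Perm ll' ∧ x ∈ S.SOP ll ∧ y ∈ S.SOP ll'

/-- The relation `α×` : permuting the factors inside each product. -/
def alphaTimes (S : Hyperring R) (x y : R) : Prop :=
  ∃ ll ll', S.ValidExpr ll ∧ List.Forall₂ List.Perm ll ll' ∧ x ∈ S.SOP ll ∧ y ∈ S.SOP ll'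

/-- The Davvaz–Vougiouklis relation `α` : permuting factors inside each
product and then permuting the summands. -/
def alpha (S : Hyperring R) (x y : R) : Prop :=
  ∃ ll mid ll', S.ValidExpr ll ∧ List.Forall₂ List.Perm ll mid ∧ mid.Perm ll' ∧
    x ∈ S.SOP ll ∧ y ∈ S.SOP ll'

/-- Condition `𝔓ₑ` : each product of the second expression is obtained from the
corresponding product of the first by inserting a block of copies of `e`. -/
def CondP (S : Hyperring R) (e : R) (ll ll' : List (List R)) : Prop :=
  List.Forall₂ (InsertBlock e) ll ll'

/-- The relation `(λ^e_×)ₘ`. -/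
def lamTimesN (S : Hyperring R) (e : R) (m : ℕ) (x y : R) : Prop :=
  ∃ ll ll', ll.length = m ∧ S.ValidExpr ll ∧ S.CondP e ll ll' ∧
    ((x ∈ S.SOP ll ∧ y ∈ S.SOP ll') ∨ (x ∈ S.SOP ll' ∧ y ∈ S.SOP ll))

/-- The relation `λ^e_×`. -/
def lamTimes (S : Hyperring R) (e : R) (x y : R) : Prop :=
  ∃ m, 1 ≤ m ∧ S.lamTimesN e m x y

/-- The relation `λₑ = λ^e_× ∪ α₊`. -/
def lam (S : Hyperring R) (e : R) (x y : R) : Prop :=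
  S.lamTimes e x y ∨ S.alphaPlus x y

/-- The relation `Λₑ = λ^e_× ∪ α`. -/
def Lam (S : Hyperring R) (e : R) (x y : R) : Prop :=
  S.lamTimes e x y ∨ S.alpha x y

/-- `M` is a `λₑ`-part. -/
def IsLamPart (S : Hyperring R) (e : R) (M : Set R) : Prop :=
  (∀ ll ll', S.ValidExpr ll → ll.Perm ll' → (S.SOP ll ∩ M).Nonempty → S.SOP ll' ⊆ M) ∧
  (∀ ll ll', S.ValidExpr ll → (S.CondP e ll ll' ∨ S.CondP e ll' ll) →
      (S.SOP ll ∩ M).Nonempty → S.SOP ll' ⊆ M)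

/-- A `λₑ`-strong hyperring. -/
def LamStrong (S : Hyperring R) (e : R) : Prop :=
  (∀ x y, Relation.TransGen (S.lam e) x y →
      (S.mul.op x e ∩ S.mul.op y e).Nonempty ∧ (S.mul.op e x ∩ S.mul.op e y).Nonempty) ∧
  (∀ x z, z ∈ S.mul.op x e → x ∈ S.mul.op z e) ∧
  (∀ x z, z ∈ S.mul.op e x → x ∈ S.mul.op e z)

end Hyperring

theorem Relation.TransGen.forall_mem_of_nonempty {H : Type*} {T : H → H → Prop}
    {f : H → Set H} (hf : ∀ x, (f x).Nonempty)
    (hT : ∀ x y, T x y → ∀ u ∈ f x, ∀ v ∈ f y, T u v) {x y : H}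
    (hxy : Relation.TransGen T x y) : ∀ u ∈ f x, ∀ v ∈ f y, Relation.TransGen T u v := by
  induction hxy with
  | single hxb => exact fun u hu v hv => .single (hT _ _ hxb u hu v hv)
  | @tail b c _ hbc ih =>
    intro u hu v hv
    obtain ⟨w, hw⟩ := hf b
    exact (ih u hu w hw).tail (hT b c hbc w hw v hv)

namespace Hyperop

variable {H : Type*} {h : Hyperop H} {T U : H → H → Prop}

theorem StronglyRegular.or (hT : h.StronglyRegular T) (hU : h.StronglyRegular U) :
    h.StronglyRegular (fun a b => T a b ∨ U a b) := by
  intro x y hxy a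
  rcases hxy with hxy | hxy
  · exact ⟨fun u hu v hv => .inl ((hT x y hxy a).1 u hu v hv),
      fun u hu v hv => .inl ((hT x y hxy a).2 u hu v hv)⟩
  · exact ⟨fun u hu v hv => .inr ((hU x y hxy a).1 u hu v hv),
      fun u hu v hv => .inr ((hU x y hxy a).2 u hu v hv)⟩

theorem StronglyRegular.transGen (hT : h.StronglyRegular T) :
    h.StronglyRegular (Relation.TransGen T) := fun _ _ hxy a =>
  ⟨hxy.forall_mem_of_nonempty (h.op_nonempty a) fun x y hxy => (hT x y hxy a).1,
    hxy.forall_mem_of_nonempty (fun x => h.op_nonempty x a) fun x y hxy => (hT x y hxy a).2⟩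

end Hyperop

theorem stmt0_general {H : Type*} (h : Hyperop H)
    (Rr Sr : H → H → Prop)
    (hRreg : h.StronglyRegular Rr) (hSreg : h.StronglyRegular Sr) :
    h.StronglyRegular (Relation.TransGen (fun a b => Rr a b ∨ Sr a b)) :=
  (Hyperop.StronglyRegular.or hRreg hSreg).transGen

/-- the transitive closure of the union of two strongly regular
equivalence relations on a semi-hypergroup is strongly regular. -/
theorem stmt0 {H : Type*} (h : Hyperop H) (hassoc : h.IsAssoc)
    (Rr Sr : H → H → Prop) (hR : Equivalence Rr) (hS : Equivalence Sr)
    (hRreg : h.StronglyRegular Rr) (hSreg : h.StronglyRegular Sr) :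
    h.StronglyRegular (Relation.TransGen (fun a b => Rr a b ∨ Sr a b)) :=
  stmt0_general h Rr Sr hRreg hSreg
end

section
/- Let (R, +, ·) be a hyperring, e ∈ R, and λₑ = λ^e_× ∪ α₊. Then the quotient R/λₑ* by the transitive closure λₑ* is a ring with multiplicative identity λₑ*(e). -/
/-- The setoid given by the transitive (= equivalence) closure of `λₑ`. -/
def lamSetoid {R : Type*} (S : Hyperring R) (e : R) : Setoid R :=
  ⟨Relation.EqvGen (S.lam e), Relation.EqvGen.is_equivalence _⟩

/-!
Adding a summand on either side of a sum of products, or multiplying each of its products by a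
factor on either side, again yields a sum of products (by associativity and distributivity), and
these moves preserve both permutations of summands and insertions of blocks of `e`. Hence `λₑ`,
and with it its equivalence closure, is strongly regular for both hyperoperations, which therefore
descend to operations on `R/λₑ*`. Associativity and distributivity descend directly; the
reproduction axiom makes every equation `a + x = b`, `y + a = b` solvable, and an associative
operation with this property is a group. Finally `e·x` and `x·e` are `λₑ`-related to `x`: they
arise from the one-factor product `x` by inserting a single `e`.
-/

namespace Hyperop

variable {H : Type*} (h : Hyperop H)

@[simp]
theorem mem_sop {A B : Set H} {z : H} :
    z ∈ h.sop A B ↔ ∃ a ∈ A, ∃ b ∈ B, z ∈ h.op a b := by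
  simp [sop]

theorem mem_sop_singleton_left {a : H} {B : Set H} {z : H} :
    z ∈ h.sop {a} B ↔ ∃ b ∈ B, z ∈ h.op a b := by
  simp

theorem sop_singleton (x y : H) : h.sop {x} {y} = h.op x y := by
  simp [sop]

theorem sop_mono {A A' B B' : Set H} (hA : A ⊆ A') (hB : B ⊆ B') : h.sop A B ⊆ h.sop A' B' :=
  Set.biUnion_subset_biUnion_left hA |>.trans <| Set.biUnion_mono subset_rfl fun _ _ =>
    Set.biUnion_subset_biUnion_left hB

theorem sop_assoc (ha : h.IsAssoc) (A B C : Set H) :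
    h.sop (h.sop A B) C = h.sop A (h.sop B C) := by
  ext z
  simp only [mem_sop]
  constructor
  · rintro ⟨w, ⟨a, ha', b, hb, hw⟩, c, hc, hz⟩
    have : z ∈ h.sop {a} (h.op b c) := ha a b c ▸ h.mem_sop.2 ⟨w, hw, c, rfl, hz⟩
    obtain ⟨s, hs, hz⟩ := h.mem_sop_singleton_left.1 this
    exact ⟨a, ha', s, ⟨b, hb, c, hc, hs⟩, hz⟩
  · rintro ⟨a, ha', s, ⟨b, hb, c, hc, hs⟩, hz⟩
    have : z ∈ h.sop (h.op a b) {c} := (ha a b c).symm ▸ h.mem_sop.2 ⟨a, rfl, s, hs, hz⟩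
    obtain ⟨w, hw, _, rfl, hz⟩ := h.mem_sop.1 this
    exact ⟨w, ⟨a, ha', b, hb, hw⟩, _, hc, hz⟩

theorem setFold_append (A : Set H) (l₁ l₂ : List (Set H)) :
    h.setFold A (l₁ ++ l₂) = h.setFold (h.setFold A l₁) l₂ := by
  induction l₁ generalizing A with
  | nil => rfl
  | cons B l ih => exact ih _

theorem setFold_sop (ha : h.IsAssoc) (A B : Set H) (l : List (Set H)) :
    h.setFold (h.sop A B) l = h.sop A (h.setFold B l) := by
  induction l generalizing B with
  | nil => rfl
  | cons C l ih => simp only [setFold, h.sop_assoc ha, ih]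

theorem sop_biUnion_left {ι : Type*} (s : Set ι) (f : ι → Set H) (B : Set H) :
    h.sop (⋃ i ∈ s, f i) B = ⋃ i ∈ s, h.sop (f i) B := by
  ext z; simp only [mem_sop, Set.mem_iUnion]; aesop

theorem foldl_cons (ha : h.IsAssoc) (x y : H) (l : List H) :
    h.foldl x (y :: l) = h.sop {x} (h.foldl y l) := by
  induction l generalizing x y with
  | nil => simp [foldl, sop]
  | cons c l ih =>
    calc h.foldl x (y :: c :: l) = ⋃ z ∈ h.op x y, h.sop {z} (h.foldl c l) :=
          Set.iUnion₂_congr fun z _ => ih z c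
      _ = h.sop {x} (h.foldl y (c :: l)) := by
          rw [← h.sop_biUnion_left, Set.biUnion_of_singleton, ← h.sop_singleton,
            h.sop_assoc ha, ih]

theorem foldl_concat (x y : H) (l : List H) :
    h.foldl x (l ++ [y]) = h.sop (h.foldl x l) {y} := by
  induction l generalizing x with
  | nil => simp [foldl, sop]
  | cons z l ih => exact (Set.iUnion₂_congr fun w _ => ih w).trans (h.sop_biUnion_left ..).symm

theorem listProd_cons (ha : h.IsAssoc) (x : H) {l : List H} (hl : l ≠ []) :
    h.listProd (x :: l) = h.sop {x} (h.listProd l) := by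
  obtain ⟨y, l, rfl⟩ := List.exists_cons_of_ne_nil hl
  exact h.foldl_cons ha x y l

theorem listProd_concat (y : H) {l : List H} (hl : l ≠ []) :
    h.listProd (l ++ [y]) = h.sop (h.listProd l) {y} := by
  obtain ⟨x, l, rfl⟩ := List.exists_cons_of_ne_nil hl
  exact h.foldl_concat x y l

end Hyperop

namespace Hyperring

variable {R : Type*} (S : Hyperring R)

theorem mul_sop_add_sop_left (a : R) (B C : Set R) :
    S.mul.sop {a} (S.add.sop B C) = S.add.sop (S.mul.sop {a} B) (S.mul.sop {a} C) := by
  have key b c := Set.ext_iff.1 (S.left_distrib a b c)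
  ext z
  simp only [Hyperop.mem_sop, Set.mem_singleton_iff, exists_eq_left] at key ⊢
  constructor
  · rintro ⟨w, ⟨b, hb, c, hc, hw⟩, hz⟩
    obtain ⟨u, hu, v, hv, hz⟩ := (key b c z).1 ⟨w, hw, hz⟩
    exact ⟨u, ⟨b, hb, hu⟩, v, ⟨c, hc, hv⟩, hz⟩
  · rintro ⟨u, ⟨b, hb, hu⟩, v, ⟨c, hc, hv⟩, hz⟩
    obtain ⟨w, hw, hz⟩ := (key b c z).2 ⟨u, hu, v, hv, hz⟩
    exact ⟨w, ⟨b, hb, c, hc, hw⟩, hz⟩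

theorem mul_sop_add_sop_right (a : R) (B C : Set R) :
    S.mul.sop (S.add.sop B C) {a} = S.add.sop (S.mul.sop B {a}) (S.mul.sop C {a}) := by
  have key b c := Set.ext_iff.1 (S.right_distrib a b c)
  ext z
  simp only [Hyperop.mem_sop, Set.mem_singleton_iff, exists_eq_left] at key ⊢
  constructor
  · rintro ⟨w, ⟨b, hb, c, hc, hw⟩, hz⟩
    obtain ⟨u, hu, v, hv, hz⟩ := (key b c z).1 ⟨w, hw, hz⟩
    exact ⟨u, ⟨b, hb, hu⟩, v, ⟨c, hc, hv⟩, hz⟩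
  · rintro ⟨u, ⟨b, hb, hu⟩, v, ⟨c, hc, hv⟩, hz⟩
    obtain ⟨w, hw, hz⟩ := (key b c z).2 ⟨u, hu, v, hv, hz⟩
    exact ⟨w, ⟨b, hb, c, hc, hw⟩, hz⟩

theorem mul_sop_setFold_left (a : R) (A : Set R) (l : List (Set R)) :
    S.mul.sop {a} (S.add.setFold A l) =
      S.add.setFold (S.mul.sop {a} A) (l.map (S.mul.sop {a})) := by
  induction l generalizing A with
  | nil => rfl
  | cons B l ih => simp only [Hyperop.setFold, List.map_cons, ih, mul_sop_add_sop_left]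

theorem mul_sop_setFold_right (a : R) (A : Set R) (l : List (Set R)) :
    S.mul.sop (S.add.setFold A l) {a} =
      S.add.setFold (S.mul.sop A {a}) (l.map (S.mul.sop · {a})) := by
  induction l generalizing A with
  | nil => rfl
  | cons B l ih => simp only [Hyperop.setFold, List.map_cons, ih, mul_sop_add_sop_right]

theorem SOP_singleton_cons (a : R) {ll : List (List R)} (h : ll ≠ []) :
    S.SOP ([a] :: ll) = S.add.sop {a} (S.SOP ll) := by
  obtain ⟨l, t, rfl⟩ := List.exists_cons_of_ne_nil h
  exact S.add.setFold_sop S.add_assoc _ _ _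

theorem SOP_append_singleton (a : R) {ll : List (List R)} (h : ll ≠ []) :
    S.SOP (ll ++ [[a]]) = S.add.sop (S.SOP ll) {a} := by
  obtain ⟨l, t, rfl⟩ := List.exists_cons_of_ne_nil h
  simp only [List.cons_append, SOP, List.map_append, Hyperop.setFold_append]
  rfl

theorem SOP_map_cons (a : R) {ll : List (List R)} (h : S.ValidExpr ll) :
    S.SOP (ll.map (a :: ·)) = S.mul.sop {a} (S.SOP ll) := by
  obtain ⟨hne, hmem⟩ := h
  obtain ⟨l, t, rfl⟩ := List.exists_cons_of_ne_nil hne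
  have hprod : ∀ m ∈ l :: t, S.mul.listProd (a :: m) = S.mul.sop {a} (S.mul.listProd m) :=
    fun m hm => S.mul.listProd_cons S.mul_assoc a (hmem m hm)
  simp only [SOP, List.map_cons, List.map_map]
  rw [mul_sop_setFold_left, hprod l (by simp), List.map_map]
  exact congrArg _ (List.map_congr_left fun m hm => hprod m (by simp [hm]))

theorem SOP_map_concat (a : R) {ll : List (List R)} (h : S.ValidExpr ll) :
    S.SOP (ll.map (· ++ [a])) = S.mul.sop (S.SOP ll) {a} := by
  obtain ⟨hne, hmem⟩ := h
  obtain ⟨l, t, rfl⟩ := List.exists_cons_of_ne_nil hne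
  have hprod : ∀ m ∈ l :: t, S.mul.listProd (m ++ [a]) = S.mul.sop (S.mul.listProd m) {a} :=
    fun m hm => S.mul.listProd_concat a (hmem m hm)
  simp only [SOP, List.map_cons, List.map_map]
  rw [mul_sop_setFold_right, hprod l (by simp), List.map_map]
  exact congrArg _ (List.map_congr_left fun m hm => hprod m (by simp [hm]))

theorem SOP_pair (a b : R) : S.SOP [[a, b]] = S.mul.op a b := by
  ext z
  simp [SOP, Hyperop.listProd, Hyperop.setFold, Hyperop.foldl]

end Hyperring

namespace InsertBlock

variable {α : Type*} {e : α} {l l' : List α}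

theorem cons (a : α) (h : InsertBlock e l l') : InsertBlock e (a :: l) (a :: l') := by
  rcases h with rfl | ⟨p, q, k, hk, rfl, rfl⟩
  · exact Or.inl rfl
  · exact Or.inr ⟨a :: p, q, k, hk, rfl, rfl⟩

theorem append_right (r : List α) (h : InsertBlock e l l') :
    InsertBlock e (l ++ r) (l' ++ r) := by
  rcases h with rfl | ⟨p, q, k, hk, rfl, rfl⟩
  · exact Or.inl rfl
  · exact Or.inr ⟨p, q ++ r, k, hk, by simp, by simp⟩

theorem ne_nil (h : InsertBlock e l l') (hl : l ≠ []) : l' ≠ [] := by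
  rcases h with rfl | ⟨p, q, k, hk, rfl, rfl⟩
  · exact hl
  · cases k <;> simp_all

end InsertBlock

namespace Hyperring

variable {R : Type*} (S : Hyperring R) {e : R}

theorem CondP.map {ll ll' : List (List R)} (h : S.CondP e ll ll') {f : List R → List R}
    (hf : ∀ l l', InsertBlock e l l' → InsertBlock e (f l) (f l')) :
    S.CondP e (ll.map f) (ll'.map f) :=
  List.forall₂_map_left_iff.2 <| List.forall₂_map_right_iff.2 <| h.imp hf

theorem ValidExpr.perm {ll ll' : List (List R)} (h : S.ValidExpr ll) (hp : ll.Perm ll') :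
    S.ValidExpr ll' :=
  ⟨fun hnil => h.1 (hnil ▸ hp).eq_nil, fun l hl => h.2 l (hp.mem_iff.2 hl)⟩

theorem ValidExpr.of_condP {ll ll' : List (List R)} (h : S.ValidExpr ll)
    (hc : S.CondP e ll ll') : S.ValidExpr ll' := by
  refine ⟨fun hnil => h.1 (List.forall₂_nil_right_iff.1 (hnil ▸ hc)), ?_⟩
  obtain ⟨-, hne⟩ := h
  induction hc with
  | nil => simp
  | cons hb _ ih =>
    simp only [List.mem_cons, forall_eq_or_imp] at hne ⊢
    exact ⟨hb.ne_nil hne.1, ih hne.2⟩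

theorem lam_refl (e x : R) : S.lam e x x :=
  Or.inr ⟨[[x]], [[x]], ⟨by simp, by simp⟩, List.Perm.refl _, rfl, rfl⟩

theorem lam_map {f : List (List R) → List (List R)} {F : Set R → Set R} (hF : Monotone F)
    (hvalid : ∀ ll, S.ValidExpr ll → S.ValidExpr (f ll))
    (hSOP : ∀ ll, S.ValidExpr ll → S.SOP (f ll) = F (S.SOP ll))
    (hperm : ∀ ll ll', ll.Perm ll' → (f ll).Perm (f ll'))
    (hcond : ∀ ll ll', S.CondP e ll ll' → S.CondP e (f ll) (f ll'))
    {x y : R} (hxy : S.lam e x y) : ∀ u ∈ F {x}, ∀ v ∈ F {y}, S.lam e u v := by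
  intro u hu v hv
  have mem {z : R} {A : Set R} (hz : z ∈ A) : F {z} ⊆ F A :=
    hF (Set.singleton_subset_iff.2 hz)
  rcases hxy with ⟨-, -, ll, ll', -, hll, hc, hxy⟩ | ⟨ll, ll', hll, hp, hx, hy⟩
  · refine Or.inl ⟨_, List.length_pos_iff.2 (hvalid ll hll).1, f ll, f ll', rfl, hvalid ll hll,
      hcond _ _ hc, ?_⟩
    rw [hSOP ll hll, hSOP ll' (hll.of_condP S hc)]
    exact hxy.imp (fun h => ⟨mem h.1 hu, mem h.2 hv⟩) (fun h => ⟨mem h.1 hu, mem h.2 hv⟩)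
  · refine Or.inr ⟨f ll, f ll', hvalid ll hll, hperm _ _ hp, ?_, ?_⟩
    · exact hSOP ll hll ▸ mem hx hu
    · exact hSOP ll' (hll.perm S hp) ▸ mem hy hv

theorem lam_stronglyRegular_add (e : R) : S.add.StronglyRegular (S.lam e) := by
  intro x y hxy a
  simp only [← Hyperop.sop_singleton]
  constructor
  · refine S.lam_map (fun _ _ h => S.add.sop_mono subset_rfl h) (fun ll h => ?_)
      (fun ll h => S.SOP_singleton_cons a h.1) (fun _ _ h => h.cons [a])
      (fun _ _ h => List.Forall₂.cons (Or.inl rfl) h) hxy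
    exact ⟨by simp, by simpa using h.2⟩
  · refine S.lam_map (fun _ _ h => S.add.sop_mono h subset_rfl) (fun ll h => ?_)
      (fun ll h => S.SOP_append_singleton a h.1) (fun _ _ h => h.append_right [[a]])
      (fun _ _ h => List.rel_append h (List.Forall₂.cons (Or.inl rfl) .nil)) hxy
    exact ⟨by simp, by simpa [or_imp, forall_and] using h.2⟩

theorem lam_stronglyRegular_mul (e : R) : S.mul.StronglyRegular (S.lam e) := by
  intro x y hxy a
  simp only [← Hyperop.sop_singleton]
  constructor
  · refine S.lam_map (fun _ _ h => S.mul.sop_mono subset_rfl h) (fun ll h => ?_)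
      (fun ll h => S.SOP_map_cons a h) (fun _ _ h => h.map _)
      (fun _ _ h => h.map S fun _ _ => InsertBlock.cons a) hxy
    exact ⟨by simp [h.1], by simp⟩
  · refine S.lam_map (fun _ _ h => S.mul.sop_mono h subset_rfl) (fun ll h => ?_)
      (fun ll h => S.SOP_map_concat a h) (fun _ _ h => h.map _)
      (fun _ _ h => h.map S fun _ _ => InsertBlock.append_right [a]) hxy
    exact ⟨by simp [h.1], by simp⟩

end Hyperring

theorem exists_neutral_and_inverses_of_solvable {α : Type*} (op : α → α → α) (a₀ : α)
    (assoc : ∀ a b c, op (op a b) c = op a (op b c))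
    (solve_right : ∀ a b, ∃ c, op a c = b) (solve_left : ∀ a b, ∃ c, op c a = b) :
    ∃ z, (∀ a, op z a = a ∧ op a z = a) ∧ ∀ a, ∃ b, op a b = z ∧ op b a = z := by
  obtain ⟨r, hr⟩ := solve_right a₀ a₀
  obtain ⟨l, hl⟩ := solve_left a₀ a₀
  have right_neutral (b : α) : op b r = b := by
    obtain ⟨c, rfl⟩ := solve_left a₀ b
    rw [assoc, hr]
  have left_neutral (b : α) : op l b = b := by
    obtain ⟨c, rfl⟩ := solve_right a₀ b
    rw [← assoc, hl]
  obtain rfl : l = r := (right_neutral l).symm.trans (left_neutral r)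
  refine ⟨l, fun a => ⟨left_neutral a, right_neutral a⟩, fun a => ?_⟩
  obtain ⟨b, hb⟩ := solve_right a l
  obtain ⟨c, hc⟩ := solve_left a l
  have hcb : c = b := by
    rw [← right_neutral c, ← hb, ← assoc, hc, left_neutral]
  exact ⟨b, hb, hcb ▸ hc⟩

namespace Hyperop

variable {H : Type*} {h : Hyperop H}

theorem StronglyRegular.eqvGen {T : H → H → Prop} (hT : h.StronglyRegular T)
    (hrefl : ∀ x, T x x) : h.StronglyRegular (Relation.EqvGen T) := by
  have base (x y : H) (hxy : T x y) (a : H) :=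
    And.intro (fun u hu v hv => Relation.EqvGen.rel u v ((hT x y hxy a).1 u hu v hv))
      (fun u hu v hv => Relation.EqvGen.rel u v ((hT x y hxy a).2 u hu v hv))
  intro x y hxy
  induction hxy with
  | rel x y hxy => exact base x y hxy
  | refl x => exact base x x (hrefl x)
  | symm x y _ ih =>
    exact fun a => ⟨fun u hu v hv => .symm _ _ ((ih a).1 v hv u hu),
      fun u hu v hv => .symm _ _ ((ih a).2 v hv u hu)⟩
  | trans x y z _ _ ihxy ihyz =>
    intro a
    obtain ⟨w, hw⟩ := h.op_nonempty a y
    obtain ⟨w', hw'⟩ := h.op_nonempty y a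
    exact ⟨fun u hu v hv => .trans _ _ _ ((ihxy a).1 u hu w hw) ((ihyz a).1 w hw v hv),
      fun u hu v hv => .trans _ _ _ ((ihxy a).2 u hu w' hw') ((ihyz a).2 w' hw' v hv)⟩

variable (h) in
def IsQuotientOp (s : Setoid H) (q : Quotient s → Quotient s → Quotient s) : Prop :=
  ∀ x y, ∀ z ∈ h.op x y, q ⟦x⟧ ⟦y⟧ = ⟦z⟧

theorem StronglyRegular.exists_isQuotientOp {s : Setoid H} (hs : h.StronglyRegular s) :
    ∃ q, h.IsQuotientOp s q := by
  have hrel {x x' y y' u v : H} (hx : s x x') (hy : s y y') (hu : u ∈ h.op x y)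
      (hv : v ∈ h.op x' y') : s u v := by
    obtain ⟨w, hw⟩ := h.op_nonempty x y'
    exact s.trans ((hs y y' hy x).1 u hu w hw) ((hs x x' hx y').2 w hw v hv)
  exact ⟨Quotient.map₂ (fun x y => (h.op_nonempty x y).some)
      fun _ _ hx _ _ hy => hrel hx hy (Set.Nonempty.some_mem _) (Set.Nonempty.some_mem _),
    fun x y z hz => Quotient.sound (hrel (s.refl x) (s.refl y) (Set.Nonempty.some_mem _) hz)⟩

namespace IsQuotientOp

variable {s : Setoid H} {q : Quotient s → Quotient s → Quotient s} (hq : h.IsQuotientOp s q)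
include hq

theorem assoc (ha : h.IsAssoc) (a b c : Quotient s) : q (q a b) c = q a (q b c) := by
  induction a, b, c using Quotient.inductionOn₃ with | _ x y z => ?_
  obtain ⟨u, hu⟩ := h.op_nonempty x y
  obtain ⟨w, hw⟩ := h.op_nonempty u z
  have hw' : w ∈ h.sop {x} (h.op y z) := ha x y z ▸ h.mem_sop.2 ⟨u, hu, z, rfl, hw⟩
  obtain ⟨t, ht, hwt⟩ := h.mem_sop_singleton_left.1 hw'
  rw [hq x y u hu, hq u z w hw, hq y z t ht, hq x t w hwt]

theorem exists_right_eq (hr : h.IsReproductive) (a b : Quotient s) : ∃ c, q a c = b := by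
  induction a, b using Quotient.inductionOn₂ with | _ x y => ?_
  obtain ⟨u, hu⟩ := (hr x y).1
  exact ⟨⟦u⟧, hq x u y hu⟩

theorem exists_left_eq (hr : h.IsReproductive) (a b : Quotient s) : ∃ c, q c a = b := by
  induction a, b using Quotient.inductionOn₂ with | _ x y => ?_
  obtain ⟨v, hv⟩ := (hr x y).2
  exact ⟨⟦v⟧, hq v x y hv⟩

theorem left_distrib {k : Hyperop H} {p : Quotient s → Quotient s → Quotient s}
    (hp : k.IsQuotientOp s p) (hd : ∀ x y z, h.sop {x} (k.op y z) = k.sop (h.op x y) (h.op x z))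
    (a b c : Quotient s) : q a (p b c) = p (q a b) (q a c) := by
  induction a, b, c using Quotient.inductionOn₃ with | _ x y z => ?_
  obtain ⟨w, hw⟩ := k.op_nonempty y z
  obtain ⟨t, ht⟩ := h.op_nonempty x w
  have ht' : t ∈ k.sop (h.op x y) (h.op x z) := hd x y z ▸ h.mem_sop.2 ⟨x, rfl, w, hw, ht⟩
  obtain ⟨u, hu, v, hv, htuv⟩ := k.mem_sop.1 ht'
  rw [hp y z w hw, hq x w t ht, hq x y u hu, hq x z v hv, hp u v t htuv]

theorem right_distrib {k : Hyperop H} {p : Quotient s → Quotient s → Quotient s}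
    (hp : k.IsQuotientOp s p) (hd : ∀ x y z, h.sop (k.op y z) {x} = k.sop (h.op y x) (h.op z x))
    (a b c : Quotient s) : q (p a b) c = p (q a c) (q b c) := by
  induction a, b, c using Quotient.inductionOn₃ with | _ x y z => ?_
  obtain ⟨w, hw⟩ := k.op_nonempty x y
  obtain ⟨t, ht⟩ := h.op_nonempty w z
  have ht' : t ∈ k.sop (h.op x z) (h.op y z) := hd z x y ▸ h.mem_sop.2 ⟨w, hw, z, rfl, ht⟩
  obtain ⟨u, hu, v, hv, htuv⟩ := k.mem_sop.1 ht'
  rw [hp x y w hw, hq w z t ht, hq x z u hu, hq y z v hv, hp u v t htuv]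

theorem mk_left_neutral {e : H} (he : ∀ x, ∀ z ∈ h.op e x, s x z) (a : Quotient s) :
    q ⟦e⟧ a = a := by
  induction a using Quotient.inductionOn with | _ x => ?_
  obtain ⟨z, hz⟩ := h.op_nonempty e x
  exact (hq e x z hz).trans (Quotient.sound (he x z hz)).symm

theorem mk_right_neutral {e : H} (he : ∀ x, ∀ z ∈ h.op x e, s x z) (a : Quotient s) :
    q a ⟦e⟧ = a := by
  induction a using Quotient.inductionOn with | _ x => ?_
  obtain ⟨z, hz⟩ := h.op_nonempty x e
  exact (hq x e z hz).trans (Quotient.sound (he x z hz)).symm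

end IsQuotientOp

end Hyperop

namespace Hyperring

variable {R : Type*} (S : Hyperring R)

theorem lam_of_mem_mul_left {e x z : R} (hz : z ∈ S.mul.op e x) : S.lam e x z :=
  Or.inl ⟨1, le_rfl, [[x]], [[e, x]], rfl, ⟨by simp, by simp⟩,
    .cons (Or.inr ⟨[], [x], 1, le_rfl, rfl, rfl⟩) .nil,
    Or.inl ⟨rfl, S.SOP_pair e x ▸ hz⟩⟩

theorem lam_of_mem_mul_right {e x z : R} (hz : z ∈ S.mul.op x e) : S.lam e x z :=
  Or.inl ⟨1, le_rfl, [[x]], [[x, e]], rfl, ⟨by simp, by simp⟩,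
    .cons (Or.inr ⟨[x], [], 1, le_rfl, by simp, rfl⟩) .nil,
    Or.inl ⟨rfl, S.SOP_pair x e ▸ hz⟩⟩

end Hyperring

/-- the quotient `R/λₑ*` is a ring with multiplicative identity
the class of `e`. -/
theorem stmt11 {R : Type*} (S : Hyperring R) (e : R) :
    ∃ padd pmul : Quotient (lamSetoid S e) → Quotient (lamSetoid S e) → Quotient (lamSetoid S e),
      (∀ x y : R, ∀ z ∈ S.add.op x y,
        padd (Quotient.mk _ x) (Quotient.mk _ y) = Quotient.mk (lamSetoid S e) z) ∧
      (∀ x y : R, ∀ z ∈ S.mul.op x y,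
        pmul (Quotient.mk _ x) (Quotient.mk _ y) = Quotient.mk (lamSetoid S e) z) ∧
      (∀ a b c, padd (padd a b) c = padd a (padd b c)) ∧
      (∃ zero, (∀ a, padd zero a = a ∧ padd a zero = a) ∧
        ∀ a, ∃ b, padd a b = zero ∧ padd b a = zero) ∧
      (∀ a b c, pmul (pmul a b) c = pmul a (pmul b c)) ∧
      (∀ a b c, pmul a (padd b c) = padd (pmul a b) (pmul a c)) ∧
      (∀ a b c, pmul (padd a b) c = padd (pmul a c) (pmul b c)) ∧
      (∀ a, pmul (Quotient.mk (lamSetoid S e) e) a = a ∧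
            pmul a (Quotient.mk (lamSetoid S e) e) = a) := by
  obtain ⟨padd, hadd⟩ :=
    ((S.lam_stronglyRegular_add e).eqvGen (S.lam_refl e)).exists_isQuotientOp (s := lamSetoid S e)
  obtain ⟨pmul, hmul⟩ :=
    ((S.lam_stronglyRegular_mul e).eqvGen (S.lam_refl e)).exists_isQuotientOp (s := lamSetoid S e)
  have add_assoc := hadd.assoc S.add_assoc
  refine ⟨padd, pmul, hadd, hmul, add_assoc,
    exists_neutral_and_inverses_of_solvable padd ⟦e⟧ add_assoc
      (hadd.exists_right_eq S.add_repro) (hadd.exists_left_eq S.add_repro),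
    hmul.assoc S.mul_assoc, hmul.left_distrib hadd S.left_distrib,
    hmul.right_distrib hadd S.right_distrib, fun a => ⟨?_, ?_⟩⟩
  · exact hmul.mk_left_neutral (fun x z hz => .rel _ _ (S.lam_of_mem_mul_left hz)) a
  · exact hmul.mk_right_neutral (fun x z hz => .rel _ _ (S.lam_of_mem_mul_right hz)) a
end

section
/- Let (R, +, ·) be a hyperring and e ∈ R. The relation λₑ* is the smallest equivalence relation on R such that the quotient R/λₑ* is a ring with identity λₑ*(e): if μ is any equivalence relation on R such that R/μ is a ring whose identity is the class μ(e), then λₑ* ⊆ μ. -/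
/-!
A map `f : R → Q` into a (semi)ring that sends every element of `x + y` to `f x + f y`, every
element of `x · y` to `f x * f y`, and `e` to `1` evaluates every element of a sum-of-products
expression to the corresponding sum of products in `Q`. Inserting copies of `e` into a product
multiplies its value by a power of `1`, and permuting the summands does not change the value
because addition in `Q` is commutative, so `f` is constant on the classes of `λₑ*`.
The class map `R → R/μ` is such a map; the quotient addition is commutative because, as in any
ring with identity, expanding `(1 + 1)(a + b)` in two ways gives `a + b = b + a`
(`Ring.ofMinimalAxioms`).
-/

namespace Hyperop

variable {H M : Type*}

def IsAddHom [Add M] (h : Hyperop H) (f : H → M) : Prop :=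
  ∀ x y, ∀ z ∈ h.op x y, f z = f x + f y

def IsMulHom [Mul M] (h : Hyperop H) (f : H → M) : Prop :=
  ∀ x y, ∀ z ∈ h.op x y, f z = f x * f y

theorem IsMulHom.map_foldl [Monoid M] {h : Hyperop H} {f : H → M} (hf : h.IsMulHom f) :
    ∀ (l : List H) (x z : H), z ∈ h.foldl x l → f z = f x * (l.map f).prod
  | [], x, z, hz => by
    rw [foldl, Set.mem_singleton_iff] at hz
    simp [hz]
  | y :: l, x, z, hz => by
    simp only [foldl, Set.mem_iUnion, exists_prop] at hz
    obtain ⟨w, hw, hz⟩ := hz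
    rw [hf.map_foldl l w z hz, hf x y w hw, List.map_cons, List.prod_cons, mul_assoc]

theorem IsMulHom.map_listProd [Monoid M] {h : Hyperop H} {f : H → M} (hf : h.IsMulHom f)
    {l : List H} {z : H} (hz : z ∈ h.listProd l) : f z = (l.map f).prod := by
  cases l with
  | nil => exact absurd hz (Set.notMem_empty z)
  | cons x l =>
    rw [List.map_cons, List.prod_cons]
    exact hf.map_foldl l x z hz

theorem IsAddHom.map_setFold [AddMonoid M] {h : Hyperop H} {f : H → M} (hf : h.IsAddHom f)
    {ι : Type*} {g : ι → Set H} {v : ι → M} (hg : ∀ i, ∀ b ∈ g i, f b = v i) :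
    ∀ (is : List ι) (A : Set H) (a : M), (∀ x ∈ A, f x = a) →
      ∀ z ∈ h.setFold A (is.map g), f z = a + (is.map v).sum
  | [], A, a, hA, z, hz => by simpa using hA z hz
  | i :: is, A, a, hA, z, hz => by
    rw [List.map_cons, List.sum_cons, ← add_assoc]
    refine hf.map_setFold hg is (h.sop A (g i)) (a + v i) ?_ z hz
    intro c hc
    simp only [sop, Set.mem_iUnion, exists_prop] at hc
    obtain ⟨x, hx, b, hb, hc⟩ := hc
    rw [hf x b c hc, hA x hx, hg i b hb]

end Hyperop

theorem InsertBlock.prod_map_eq {α M : Type*} [Monoid M] {e : α} {f : α → M} (he : f e = 1)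
    {l l' : List α} (h : InsertBlock e l l') : (l'.map f).prod = (l.map f).prod := by
  rcases h with rfl | ⟨p, q, k, -, rfl, rfl⟩
  · rfl
  · simp [he]

def sumProd {α Q : Type*} [Semiring Q] (f : α → Q) (ll : List (List α)) : Q :=
  (ll.map fun l => (l.map f).prod).sum

namespace Hyperring

variable {R Q : Type*} [Semiring Q] {S : Hyperring R} {f : R → Q}

theorem map_of_mem_SOP (hadd : S.add.IsAddHom f) (hmul : S.mul.IsMulHom f) :
    ∀ {ll : List (List R)} {z : R}, z ∈ S.SOP ll → f z = sumProd f ll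
  | [], z, hz => absurd hz (Set.notMem_empty z)
  | l :: t, _, hz => by
    rw [sumProd, List.map_cons, List.sum_cons]
    exact hadd.map_setFold (fun _ _ => hmul.map_listProd) t _ _ (fun _ => hmul.map_listProd) _ hz

theorem CondP.sumProd_eq {e : R} (he : f e = 1) {ll ll' : List (List R)}
    (h : S.CondP e ll ll') : sumProd f ll = sumProd f ll' := by
  have hprod : ll.map (fun l => (l.map f).prod) = ll'.map (fun l => (l.map f).prod) := by
    rw [← List.forall₂_eq_eq_eq, List.forall₂_map_left_iff, List.forall₂_map_right_iff]
    exact h.imp fun _ _ hl => (hl.prod_map_eq he).symm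
  rw [sumProd, sumProd, hprod]

theorem map_eq_of_lam (hadd : S.add.IsAddHom f) (hmul : S.mul.IsMulHom f) {e : R}
    (he : f e = 1) {x y : R} (h : S.lam e x y) : f x = f y := by
  have hval : ∀ {ll z}, z ∈ S.SOP ll → f z = sumProd f ll := map_of_mem_SOP hadd hmul
  rcases h with ⟨-, -, ll, ll', -, -, hP, hxy⟩ | ⟨ll, ll', -, hperm, hx, hy⟩
  · rcases hxy with ⟨hx, hy⟩ | ⟨hx, hy⟩ <;> rw [hval hx, hval hy, hP.sumProd_eq he]
  · rw [hval hx, hval hy, sumProd, sumProd, (hperm.map _).sum_eq]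

theorem map_eq_of_transGen_lam (hadd : S.add.IsAddHom f) (hmul : S.mul.IsMulHom f) {e : R}
    (he : f e = 1) {x y : R} (h : Relation.TransGen (S.lam e) x y) : f x = f y := by
  induction h with
  | single h => exact map_eq_of_lam hadd hmul he h
  | tail _ h ih => exact ih.trans (map_eq_of_lam hadd hmul he h)

end Hyperring

/-- `λₑ*` is the smallest equivalence relation whose quotient is a
ring with identity the class of `e`. -/
theorem stmt12 {R : Type*} (S : Hyperring R) (e : R) (μ : Setoid R)
    (hring : ∃ padd pmul : Quotient μ → Quotient μ → Quotient μ,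
      (∀ x y : R, ∀ z ∈ S.add.op x y,
        padd (Quotient.mk μ x) (Quotient.mk μ y) = Quotient.mk μ z) ∧
      (∀ x y : R, ∀ z ∈ S.mul.op x y,
        pmul (Quotient.mk μ x) (Quotient.mk μ y) = Quotient.mk μ z) ∧
      (∀ a b c, padd (padd a b) c = padd a (padd b c)) ∧
      (∃ zero, (∀ a, padd zero a = a ∧ padd a zero = a) ∧
        ∀ a, ∃ b, padd a b = zero ∧ padd b a = zero) ∧
      (∀ a b c, pmul (pmul a b) c = pmul a (pmul b c)) ∧
      (∀ a b c, pmul a (padd b c) = padd (pmul a b) (pmul a c)) ∧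
      (∀ a b c, pmul (padd a b) c = padd (pmul a c) (pmul b c)) ∧
      (∀ a, pmul (Quotient.mk μ e) a = a ∧ pmul a (Quotient.mk μ e) = a)) :
    ∀ x y : R, Relation.TransGen (S.lam e) x y → μ.r x y := by
  obtain ⟨padd, pmul, hadd, hmul, hassoc, ⟨zero, hzero, hneg⟩, hmul_assoc, hldistrib, hrdistrib,
    hone⟩ := hring
  choose neg hneg using hneg
  let : Add (Quotient μ) := ⟨padd⟩
  let : Mul (Quotient μ) := ⟨pmul⟩
  let : Zero (Quotient μ) := ⟨zero⟩
  let : Neg (Quotient μ) := ⟨neg⟩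
  let : One (Quotient μ) := ⟨Quotient.mk μ e⟩
  let : Ring (Quotient μ) := Ring.ofMinimalAxioms hassoc (fun a => (hzero a).1)
    (fun a => (hneg a).2) hmul_assoc (fun a => (hone a).1) (fun a => (hone a).2)
    hldistrib hrdistrib
  intro x y hxy
  exact Quotient.exact <| Hyperring.map_eq_of_transGen_lam (Q := Quotient μ)
    (fun a b c hc => (hadd a b c hc).symm) (fun a b c hc => (hmul a b c hc).symm) rfl hxy
end

section
/- Let (R, +, ·) be a hyperring, e ∈ R, and M a nonempty subset of R. Then M is a λₑ-part of R if and only if for all x ∈ M and y ∈ R, x λₑ y implies y ∈ M, if and only if for all x ∈ M and y ∈ R, x λₑ* y implies y ∈ M. -/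
namespace Hyperop

variable {H : Type*} (h : Hyperop H)

@[simp]
lemma setFold_empty_left (l : List (Set H)) : h.setFold ∅ l = ∅ := by
  induction l with
  | nil => rfl
  | cons B t ih => simp [setFold, sop, ih]

lemma setFold_eq_empty_of_empty_mem {l : List (Set H)} (hl : ∅ ∈ l) (A : Set H) :
    h.setFold A l = ∅ := by
  induction l generalizing A with
  | nil => simp at hl
  | cons B t ih =>
    rcases List.mem_cons.1 hl with rfl | ht
    · simp [setFold, sop]
    · exact ih ht _

end Hyperop

namespace Hyperring

variable {R : Type*} (S : Hyperring R)

lemma SOP_eq_empty_of_nil_mem {ll : List (List R)} (hll : [] ∈ ll) : S.SOP ll = ∅ := by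
  cases ll with
  | nil => rfl
  | cons l t =>
    rcases List.mem_cons.1 hll with rfl | ht
    · simp [SOP, Hyperop.listProd]
    · exact S.add.setFold_eq_empty_of_empty_mem (List.mem_map.2 ⟨[], ht, rfl⟩) _

lemma validExpr_of_mem_SOP {ll : List (List R)} {x : R} (hx : x ∈ S.SOP ll) :
    S.ValidExpr ll := by
  refine ⟨?_, fun l hl hnil => ?_⟩
  · rintro rfl
    exact hx
  · rw [S.SOP_eq_empty_of_nil_mem (hnil ▸ hl)] at hx
    exact hx

variable {S} {e : R} {M : Set R}

lemma IsLamPart.mem_of_lam (hM : S.IsLamPart e M) {x y : R} (hx : x ∈ M) (hxy : S.lam e x y) :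
    y ∈ M := by
  obtain ⟨hperm, hcond⟩ := hM
  rcases hxy with ⟨-, -, ll, ll', -, hv, hc, ⟨hxl, hyl⟩ | ⟨hxl, hyl⟩⟩ | ⟨ll, ll', hv, hp, hxl, hyl⟩
  · exact hcond ll ll' hv (Or.inl hc) ⟨x, hxl, hx⟩ hyl
  · exact hcond ll' ll (S.validExpr_of_mem_SOP hxl) (Or.inr hc) ⟨x, hxl, hx⟩ hyl
  · exact hperm ll ll' hv hp ⟨x, hxl, hx⟩ hyl

lemma isLamPart_of_forall_lam (hM : ∀ x ∈ M, ∀ y, S.lam e x y → y ∈ M) : S.IsLamPart e M := by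
  refine ⟨?_, ?_⟩
  · rintro ll ll' hv hp ⟨x, hxl, hx⟩ y hy
    exact hM x hx y (Or.inr ⟨ll, ll', hv, hp, hxl, hy⟩)
  · rintro ll ll' hv (hc | hc) ⟨x, hxl, hx⟩ y hy
    · exact hM x hx y
        (Or.inl ⟨ll.length, List.length_pos_iff.2 hv.1, ll, ll', rfl, hv, hc, Or.inl ⟨hxl, hy⟩⟩)
    · -- `lamTimesN` needs its first expression valid; `ll'` is, its sum of products being inhabited.
      have hv' := S.validExpr_of_mem_SOP hy
      exact hM x hx y
        (Or.inl ⟨ll'.length, List.length_pos_iff.2 hv'.1, ll', ll, rfl, hv', hc, Or.inr ⟨hxl, hy⟩⟩)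

lemma isLamPart_iff_forall_lam : S.IsLamPart e M ↔ ∀ x ∈ M, ∀ y, S.lam e x y → y ∈ M :=
  ⟨fun hM _ hx _ hxy => hM.mem_of_lam hx hxy, isLamPart_of_forall_lam⟩

end Hyperring

lemma Relation.forall_transGen_mem_iff {α : Type*} {r : α → α → Prop} {M : Set α} :
    (∀ x ∈ M, ∀ y, Relation.TransGen r x y → y ∈ M) ↔ ∀ x ∈ M, ∀ y, r x y → y ∈ M := by
  refine ⟨fun hM x hx y hxy => hM x hx y (.single hxy), fun hM x hx y hxy => ?_⟩
  induction hxy with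
  | single hxy => exact hM x hx _ hxy
  | tail _ hyz ih => exact hM _ ih _ hyz

theorem stmt13_general {R : Type*} (S : Hyperring R) (e : R) (M : Set R) :
    (S.IsLamPart e M ↔ ∀ x ∈ M, ∀ y : R, S.lam e x y → y ∈ M) ∧
    (S.IsLamPart e M ↔ ∀ x ∈ M, ∀ y : R, Relation.TransGen (S.lam e) x y → y ∈ M) :=
  ⟨S.isLamPart_iff_forall_lam, S.isLamPart_iff_forall_lam.trans Relation.forall_transGen_mem_iff.symm⟩

/-- characterizations of `λₑ`-parts. -/
theorem stmt13 {R : Type*} (S : Hyperring R) (e : R) (M : Set R) (hM : M.Nonempty) :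
    (S.IsLamPart e M ↔ ∀ x ∈ M, ∀ y : R, S.lam e x y → y ∈ M) ∧
    (S.IsLamPart e M ↔ ∀ x ∈ M, ∀ y : R, Relation.TransGen (S.lam e) x y → y ∈ M) :=
  stmt13_general S e M
end
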